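/- Under the hypotheses of Theorem on simple global Newton convergence (F : U → ℝⁿ continuously differentiable, pointwise convex and monotonic on convex open U ⊇ [−2,n(n+3)]ⁿ, with F'(z⁽ʲ⁾)d⁽ʲ⁾ ≰ 0 for z⁽ʲ⁾ = −2eⱼ + n(n+3)eⱼ', d⁽ʲ⁾ = eⱼ − (n²+3n+1)eⱼ', and L defined by (n+2)(min_j max_k eₖᵀF'(z⁽ʲ⁾)d⁽ʲ⁾)⁻¹), the following holds: for every x ∈ [−1,n]ⁿ and every nonzero y ∈ ℝⁿ with F'(x)y ≥ 0 entrywise, one has max_j y_j = ‖y‖_∞ and min_j y_j > −(1/n)‖y‖_∞. -/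

import Mathlib

open Matrix Set

/-! Write `F'(x)` for the Jacobian at a point `x` of the box `[-1, n]ⁿ`. Since `F'` is a
nonnegative matrix and the derivative of a convex map is monotone,
`F'(z⁽ʲ⁾) d⁽ʲ⁾ ≤ F'(z⁽ʲ⁾)(x - z⁽ʲ⁾) ≤ F'(x)(x - z⁽ʲ⁾) ≤ (n + 2) F'(x)(eⱼ - n eⱼ')`, so the
hypothesis on `F'(z⁽ʲ⁾) d⁽ʲ⁾` gives a row `a` of `F'(x)` with `a ⬝ (eⱼ - n eⱼ') > 0`.
If `F'(x) y ≥ 0` and `yⱼ ≤ -‖y‖ / n`, then `n y + ‖y‖ (eⱼ - n eⱼ') ≤ 0` entrywise, while its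
product with `a` is `n (a ⬝ y) + ‖y‖ (a ⬝ (eⱼ - n eⱼ')) > 0`. Hence every `yⱼ > -‖y‖ / n`,
so the coordinate of largest modulus is `+‖y‖`. -/

/-- The vector `a eⱼ + b eⱼ'`. -/
def splitVec {ι : Type*} [DecidableEq ι] (j : ι) (a b : ℝ) : ι → ℝ :=
  fun i => if i = j then a else b

section

variable {ι : Type*} [Fintype ι]

lemma mulVec_mono_of_nonneg {m : Type*} {A : Matrix m ι ℝ} (hA : ∀ k i, 0 ≤ A k i)
    {v w : ι → ℝ} (h : v ≤ w) : A *ᵥ v ≤ A *ᵥ w :=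
  fun k => dotProduct_le_dotProduct_of_nonneg_left h (hA k)

variable {U : Set (ι → ℝ)} {F : (ι → ℝ) → ι → ℝ} {F' : (ι → ℝ) → Matrix ι ι ℝ}

lemma mulVec_sub_le_mulVec_sub_of_convex
    (hconv : ∀ z ∈ U, ∀ w ∈ U, F' z *ᵥ (w - z) ≤ F w - F z) {x z : ι → ℝ}
    (hx : x ∈ U) (hz : z ∈ U) : F' z *ᵥ (x - z) ≤ F' x *ᵥ (x - z) := by
  intro k
  have hzx := hconv z hz x hx k
  have hxz := hconv x hx z hz k
  rw [← neg_sub x z, mulVec_neg] at hxz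
  simp only [Pi.sub_apply, Pi.neg_apply] at hzx hxz
  linarith

lemma exists_mulVec_pos_of_sub_le (hmono : ∀ z ∈ U, ∀ k i, 0 ≤ F' z k i)
    (hconv : ∀ z ∈ U, ∀ w ∈ U, F' z *ᵥ (w - z) ≤ F w - F z) {x z d v : ι → ℝ} {t : ℝ}
    (hx : x ∈ U) (hz : z ∈ U) (ht : 0 ≤ t) (hd : d ≤ x - z) (hv : x - z ≤ t • v)
    (hpos : ∃ k, 0 < (F' z *ᵥ d) k) : ∃ k, 0 < (F' x *ᵥ v) k := by
  obtain ⟨k, hk⟩ := hpos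
  refine ⟨k, pos_of_mul_pos_right ?_ ht⟩
  calc 0 < (F' z *ᵥ d) k := hk
    _ ≤ (F' z *ᵥ (x - z)) k := mulVec_mono_of_nonneg (hmono z hz) hd k
    _ ≤ (F' x *ᵥ (x - z)) k := mulVec_sub_le_mulVec_sub_of_convex hconv hx hz k
    _ ≤ (F' x *ᵥ (t • v)) k := mulVec_mono_of_nonneg (hmono x hx) hv k
    _ = t * (F' x *ᵥ v) k := by rw [mulVec_smul, Pi.smul_apply, smul_eq_mul]

lemma neg_inv_mul_norm_lt_of_dotProduct_nonneg [DecidableEq ι] {a y : ι → ℝ} {c : ℝ}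
    (hc : 0 < c) (ha : 0 ≤ a) (hy : y ≠ 0) (hay : 0 ≤ a ⬝ᵥ y) {j : ι}
    (haj : 0 < a ⬝ᵥ splitVec j 1 (-c)) : -(1 / c) * ‖y‖ < y j := by
  by_contra! hyj
  have hnonpos : c • y + ‖y‖ • splitVec j 1 (-c) ≤ 0 := by
    intro i
    simp only [Pi.add_apply, Pi.smul_apply, smul_eq_mul, splitVec, Pi.zero_apply]
    split_ifs with hij
    · subst hij
      have : c * y i ≤ -‖y‖ := by
        calc c * y i ≤ c * (-(1 / c) * ‖y‖) := mul_le_mul_of_nonneg_left hyj hc.le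
          _ = -‖y‖ := by field_simp
      linarith
    · have : y i ≤ ‖y‖ := (le_abs_self _).trans (Real.norm_eq_abs (y i) ▸ norm_le_pi_norm y i)
      nlinarith
  have hle := dotProduct_le_dotProduct_of_nonneg_left hnonpos ha
  rw [dotProduct_add, dotProduct_smul, dotProduct_smul, dotProduct_zero, smul_eq_mul,
    smul_eq_mul] at hle
  nlinarith [mul_pos (norm_pos_iff.mpr hy) haj, mul_nonneg hc.le hay]

lemma iSup_eq_norm_of_forall_neg_norm_lt [Nonempty ι] {y : ι → ℝ} (h : ∀ j, -‖y‖ < y j) :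
    ⨆ j, y j = ‖y‖ := by
  obtain ⟨⟨i, hi⟩, -⟩ := IsGreatest.pi_norm y
  have hyi : y i = ‖y‖ := by
    replace hi : |y i| = ‖y‖ := hi
    rcases abs_cases (y i) with ⟨habs, -⟩ | ⟨habs, -⟩
    · rw [← hi, habs]
    · linarith [h i]
  refine le_antisymm (ciSup_le fun j => ?_) (hyi ▸ le_ciSup (Finite.bddAbove_range y) i)
  exact (le_abs_self _).trans (Real.norm_eq_abs (y j) ▸ norm_le_pi_norm y j)

end

lemma Icc_subset_Icc_neg_two {ι : Type*} {N : ℝ} (hN : 0 ≤ N) :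
    Icc (fun _ => -1) (fun _ => N) ⊆ Icc (fun _ : ι => (-2 : ℝ)) (fun _ => N * (N + 3)) :=
  Icc_subset_Icc (fun _ => by norm_num) (fun _ => by nlinarith)

section

variable {ι : Type*} [DecidableEq ι] {N : ℝ} {x : ι → ℝ}

lemma splitVec_mem_Icc (hN : 0 ≤ N) (j : ι) :
    splitVec j (-2) (N * (N + 3)) ∈ Icc (fun _ => (-2 : ℝ)) (fun _ => N * (N + 3)) := by
  constructor <;> intro i <;> simp only [splitVec] <;> split_ifs <;> nlinarith

lemma splitVec_le_sub_splitVec (hx : x ∈ Icc (fun _ => -1) (fun _ => N)) (j : ι) :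
    splitVec j 1 (-(N ^ 2 + 3 * N + 1)) ≤ x - splitVec j (-2) (N * (N + 3)) := by
  intro i
  have := hx.1 i
  simp only [splitVec, Pi.sub_apply]
  split_ifs <;> nlinarith

lemma sub_splitVec_le_smul_splitVec (hx : x ∈ Icc (fun _ => -1) (fun _ => N)) (j : ι) :
    x - splitVec j (-2) (N * (N + 3)) ≤ (N + 2) • splitVec j 1 (-N) := by
  intro i
  have := hx.2 i
  simp only [splitVec, Pi.sub_apply, Pi.smul_apply, smul_eq_mul]
  split_ifs <;> nlinarith

end

theorem stmt_13_general (n : ℕ) (hn : 2 ≤ n)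
    (U : Set (Fin n → ℝ))
    (hUsub : Set.Icc (fun _ => (-2:ℝ)) (fun _ => (n:ℝ) * ((n:ℝ) + 3)) ⊆ U)
    (F : (Fin n → ℝ) → (Fin n → ℝ))
    (F' : (Fin n → ℝ) → Matrix (Fin n) (Fin n) ℝ)
    (hmono : ∀ z ∈ U, ∀ k j, 0 ≤ F' z k j)
    (hconv : ∀ z ∈ U, ∀ w ∈ U, (F' z).mulVec (w - z) ≤ F w - F z)
    (hcrit : ∀ j : Fin n, ∃ k : Fin n,
      0 < ((F' (fun i => if i = j then -2 else (n:ℝ) * ((n:ℝ) + 3))).mulVec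
            (fun i => if i = j then 1 else -((n:ℝ)^2 + 3 * n + 1))) k) :
    ∀ x ∈ Set.Icc (fun _ => (-1:ℝ)) (fun _ => (n:ℝ)),
      ∀ y : Fin n → ℝ, y ≠ 0 → 0 ≤ (F' x).mulVec y →
        (⨆ j, y j) = ‖y‖ ∧ -(1 / (n : ℝ)) * ‖y‖ < ⨅ j, y j := by
  intro x hx y hy hFy
  have : Nonempty (Fin n) := ⟨⟨0, by omega⟩⟩
  have hN : (1 : ℝ) ≤ n := by exact_mod_cast (by omega : 1 ≤ n)
  have hxU : x ∈ U := hUsub (Icc_subset_Icc_neg_two (by linarith) hx)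
  have hmin : ∀ j, -(1 / (n : ℝ)) * ‖y‖ < y j := fun j => by
    obtain ⟨k, hk⟩ := exists_mulVec_pos_of_sub_le hmono hconv hxU
      (hUsub (splitVec_mem_Icc (by linarith) j)) (by linarith)
      (splitVec_le_sub_splitVec hx j) (sub_splitVec_le_smul_splitVec hx j) (hcrit j)
    exact neg_inv_mul_norm_lt_of_dotProduct_nonneg (by linarith) (hmono x hxU k) hy (hFy k) hk
  have hinv : -‖y‖ ≤ -(1 / (n : ℝ)) * ‖y‖ := by
    have : 1 / (n : ℝ) ≤ 1 := by rw [div_le_one (by linarith)]; exact hN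
    nlinarith [norm_nonneg y]
  refine ⟨iSup_eq_norm_of_forall_neg_norm_lt fun j => hinv.trans_lt (hmin j), ?_⟩
  obtain ⟨i, hi⟩ := exists_eq_ciInf_of_finite (f := y)
  exact hi ▸ hmin i

theorem stmt_13 (n : ℕ) (hn : 2 ≤ n)
    (U : Set (Fin n → ℝ)) (hUopen : IsOpen U) (hUconv : Convex ℝ U)
    (hUsub : Set.Icc (fun _ => (-2:ℝ)) (fun _ => (n:ℝ) * ((n:ℝ) + 3)) ⊆ U)
    (F : (Fin n → ℝ) → (Fin n → ℝ))
    (F' : (Fin n → ℝ) → Matrix (Fin n) (Fin n) ℝ)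
    (hderiv : ∀ z ∈ U, HasFDerivAt F ((F' z).mulVecLin.toContinuousLinearMap) z)
    (hcont : ContinuousOn F' U)
    (hmono : ∀ z ∈ U, ∀ k j, 0 ≤ F' z k j)
    (hconv : ∀ z ∈ U, ∀ w ∈ U, (F' z).mulVec (w - z) ≤ F w - F z)
    (hcrit : ∀ j : Fin n, ∃ k : Fin n,
      0 < ((F' (fun i => if i = j then -2 else (n:ℝ) * ((n:ℝ) + 3))).mulVec
            (fun i => if i = j then 1 else -((n:ℝ)^2 + 3 * n + 1))) k) :
    ∀ x ∈ Set.Icc (fun _ => (-1:ℝ)) (fun _ => (n:ℝ)),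
      ∀ y : Fin n → ℝ, y ≠ 0 → 0 ≤ (F' x).mulVec y →
        (⨆ j, y j) = ‖y‖ ∧ -(1 / (n : ℝ)) * ‖y‖ < ⨅ j, y j :=
  stmt_13_general n hn U hUsub F F' hmono hconv hcrit
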